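/- arXiv:2503.13810 — 2 statements merged into one kernel-verified Lean document; each statement's English description precedes it below -/
import Mathlib

section
/- If p > 3/4 and ℓ_inf(α) > 1/(4p−2), then B_∞² = Σ_{k=1}^∞ 1/a_k² < ∞. -/
open MeasureTheory ProbabilityTheory Filter

noncomputable section

/-- The increments `X_n := S_n - S_{n-1}` of the walk. -/
def derwX {Ω : Type*} (S : ℕ → Ω → ℝ) (n : ℕ) (ω : Ω) : ℝ := S n ω - S (n - 1) ω

/-- The natural filtration `F_n^X = σ(X_1, …, X_n)` of the increments. -/
def derwF {Ω : Type*} (S : ℕ → Ω → ℝ) (n : ℕ) : MeasurableSpace Ω :=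
  ⨆ k ∈ Finset.Icc 1 n, MeasurableSpace.comap (derwX S k) Real.measurableSpace

/-- The dynamic elephant random walk (DERW) with parameters `p, q ∈ [0,1]` and
sequences `α, β` in `[0,1]` (indexed from 1). -/
structure IsDERW {Ω : Type*} [MeasurableSpace Ω] (μ : Measure Ω)
    (p q : ℝ) (α β : ℕ → ℝ) (S : ℕ → Ω → ℝ) : Prop where
  hp : p ∈ Set.Icc (0 : ℝ) 1
  hq : q ∈ Set.Icc (0 : ℝ) 1
  hα : ∀ n, α n ∈ Set.Icc (0 : ℝ) 1
  hβ : ∀ n, β n ∈ Set.Icc (0 : ℝ) 1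
  hS0 : ∀ ω, S 0 ω = 0
  hmeas : ∀ n, Measurable (derwX S n)
  hpm : ∀ n, 1 ≤ n → ∀ ω, derwX S n ω = 1 ∨ derwX S n ω = -1
  hE1 : ∫ ω, derwX S 1 ω ∂μ = α 1 * (2 * q - 1) + (1 - α 1) * (2 * β 1 - 1)
  hCE : ∀ n, 1 ≤ n → μ[derwX S (n + 1) | derwF S n]
      =ᵐ[μ] fun ω => α (n + 1) * (2 * p - 1) / (n : ℝ) * S n ω
        + (1 - α (n + 1)) * (2 * β (n + 1) - 1)

/-- `a_n := ∏_{k=1}^{n-1} (1 + (2p-1) α_{k+1} / k)`, with `a_1 = 1`. -/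
def derwa (p : ℝ) (α : ℕ → ℝ) (n : ℕ) : ℝ :=
  ∏ k ∈ Finset.Ico 1 n, (1 + (2 * p - 1) * α (k + 1) / (k : ℝ))

/-- `A_n² := ∑_{k=1}^n (1 - E[X_k]²) / a_k²`. -/
def derwAsq {Ω : Type*} [MeasurableSpace Ω] (μ : Measure Ω) (p : ℝ) (α : ℕ → ℝ)
    (S : ℕ → Ω → ℝ) (n : ℕ) : ℝ :=
  ∑ k ∈ Finset.Icc 1 n, (1 - (∫ ω, derwX S k ω ∂μ) ^ 2) / derwa p α k ^ 2

/-- `A_∞² := ∑_{k=1}^∞ (1 - E[X_k]²) / a_k²`. -/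
def derwAsqInf {Ω : Type*} [MeasurableSpace Ω] (μ : Measure Ω) (p : ℝ) (α : ℕ → ℝ)
    (S : ℕ → Ω → ℝ) : ℝ :=
  ∑' k : ℕ, (1 - (∫ ω, derwX S (k + 1) ω ∂μ) ^ 2) / derwa p α (k + 1) ^ 2

/-- The martingale `M_n := (S_n - E[S_n]) / a_n` (note `M_0 = 0` since `S_0 = 0`). -/
def derwM {Ω : Type*} [MeasurableSpace Ω] (μ : Measure Ω) (p : ℝ) (α : ℕ → ℝ)
    (S : ℕ → Ω → ℝ) (n : ℕ) (ω : Ω) : ℝ :=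
  (S n ω - ∫ ω', S n ω' ∂μ) / derwa p α n

/-- The martingale differences `Y_n := M_n - M_{n-1}`. -/
def derwY {Ω : Type*} [MeasurableSpace Ω] (μ : Measure Ω) (p : ℝ) (α : ℕ → ℝ)
    (S : ℕ → Ω → ℝ) (n : ℕ) (ω : Ω) : ℝ :=
  derwM μ p α S n ω - derwM μ p α S (n - 1) ω

/-- `s_n² := ∑_{k=n}^∞ E[Y_k²]`. -/
def derwssq {Ω : Type*} [MeasurableSpace Ω] (μ : Measure Ω) (p : ℝ) (α : ℕ → ℝ)
    (S : ℕ → Ω → ℝ) (n : ℕ) : ℝ :=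
  ∑' k : ℕ, ∫ ω, derwY μ p α S (n + k) ω ^ 2 ∂μ

/-! Eventually `(2p - 1) α_{k+1} ≥ c` for some `c ∈ (1/2, 1]`, so by Bernoulli's inequality
`(1 + 1/n)^c ≤ 1 + c/n` the product `a_n` grows at least like `n^c`; hence `1 / a_n²` is dominated
by the convergent series `∑ n^(-2c)`. -/

theorem derwa_succ (p : ℝ) (α : ℕ → ℝ) (n : ℕ) :
    derwa p α (n + 1) = derwa p α n * (1 + (2 * p - 1) * α (n + 1) / n) := by
  rcases Nat.eq_zero_or_pos n with rfl | hn
  · simp [derwa]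
  · exact Finset.prod_Ico_succ_top hn _

theorem derwa_pos {p : ℝ} {α : ℕ → ℝ} (hp : 1 / 2 ≤ p) (hα : ∀ n, 0 ≤ α n) (n : ℕ) :
    0 < derwa p α n :=
  Finset.prod_pos fun k _ =>
    add_pos_of_pos_of_nonneg one_pos
      (div_nonneg (mul_nonneg (by linarith) (hα (k + 1))) k.cast_nonneg)

theorem mul_rpow_le_of_mul_one_add_div_le {f : ℕ → ℝ} {c : ℝ} (hc₀ : 0 ≤ c) (hc₁ : c ≤ 1)
    {N : ℕ} (hN : 1 ≤ N) (hfN : 0 ≤ f N)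
    (hstep : ∀ n : ℕ, N ≤ n → f n * (1 + c / n) ≤ f (n + 1)) :
    ∀ n ≥ N, f N / (N : ℝ) ^ c * (n : ℝ) ^ c ≤ f n := by
  intro n hn
  induction n, hn using Nat.le_induction with
  | base => rw [div_mul_cancel₀ _ (by positivity)]
  | succ n hn ih =>
    have hn₀ : (0 : ℝ) < n := by exact_mod_cast hN.trans hn
    have hbernoulli : ((n + 1 : ℝ) / n) ^ c ≤ 1 + c / n := by
      rw [add_div, div_self hn₀.ne', div_eq_mul_one_div c]
      exact rpow_one_add_le_one_add_mul_self (by linarith [one_div_pos.2 hn₀]) hc₀ hc₁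
    have hsplit : ((n + 1 : ℕ) : ℝ) ^ c = (n : ℝ) ^ c * ((n + 1 : ℝ) / n) ^ c := by
      rw [← Real.mul_rpow (by positivity) (by positivity), mul_div_cancel₀ _ hn₀.ne', Nat.cast_succ]
    have hfn : 0 ≤ f n := le_trans (by positivity) ih
    calc f N / (N : ℝ) ^ c * ((n + 1 : ℕ) : ℝ) ^ c
        = f N / (N : ℝ) ^ c * (n : ℝ) ^ c * ((n + 1 : ℝ) / n) ^ c := by rw [hsplit, mul_assoc]
      _ ≤ f n * (1 + c / n) := mul_le_mul ih hbernoulli (by positivity) hfn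
      _ ≤ f (n + 1) := hstep n hn

theorem summable_one_div_sq_of_mul_rpow_le {f : ℕ → ℝ} {K c : ℝ} (hK : 0 < K) (hc : 1 / 2 < c)
    (hf : ∀ᶠ n : ℕ in atTop, K * (n : ℝ) ^ c ≤ f n) : Summable fun n => 1 / f n ^ 2 := by
  have hsum : Summable fun n : ℕ => (K ^ 2)⁻¹ * ((n : ℝ) ^ (c * 2))⁻¹ :=
    (Real.summable_nat_rpow_inv.2 (by linarith)).mul_left _
  refine hsum.of_norm_bounded_eventually_nat ?_
  filter_upwards [hf, eventually_ge_atTop 1] with n hfn hn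
  have hpos : 0 < K * (n : ℝ) ^ c := by
    have : (0 : ℝ) < n := by exact_mod_cast hn
    positivity
  calc ‖1 / f n ^ 2‖ = 1 / f n ^ 2 := Real.norm_of_nonneg (by positivity)
    _ ≤ 1 / (K * (n : ℝ) ^ c) ^ 2 :=
      one_div_le_one_div_of_le (by positivity) (pow_le_pow_left₀ hpos.le hfn 2)
    _ = (K ^ 2)⁻¹ * ((n : ℝ) ^ (c * 2))⁻¹ := by
      rw [Real.rpow_mul n.cast_nonneg, Real.rpow_two, mul_pow, one_div, mul_inv]

theorem derw_B_finite_general (p : ℝ) (α : ℕ → ℝ)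
    (hα' : ∀ n, α n ∈ Set.Icc (0 : ℝ) 1)
    (hp : 3 / 4 < p) (hα : 1 / (4 * p - 2) < liminf α atTop) :
    Summable fun k : ℕ => 1 / derwa p α (k + 1) ^ 2 := by
  obtain ⟨ℓ, hℓ, hℓα⟩ := exists_between hα
  obtain ⟨N₀, hN₀⟩ := eventually_atTop.1 <|
    eventually_lt_of_lt_liminf hℓα (isBoundedUnder_of ⟨0, fun n => (hα' n).1⟩)
  -- capped at `1`, where Bernoulli's inequality stops holding in the needed direction
  set c := min ((2 * p - 1) * ℓ) 1
  have hc : 1 / 2 < c := by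
    refine lt_min ?_ (by norm_num)
    rw [div_lt_iff₀ (by linarith)] at hℓ
    linarith
  have ha_pos := derwa_pos (p := p) (by linarith) (fun n => (hα' n).1)
  have hstep : ∀ n : ℕ, N₀ + 1 ≤ n → derwa p α n * (1 + c / n) ≤ derwa p α (n + 1) := by
    intro n hn
    rw [derwa_succ]
    have hcα : c ≤ (2 * p - 1) * α (n + 1) :=
      (min_le_left _ _).trans <| mul_le_mul_of_nonneg_left (hN₀ (n + 1) (by omega)).le (by linarith)
    have ha_nonneg := (ha_pos n).le
    gcongr
  have hgrowth := mul_rpow_le_of_mul_one_add_div_le (by linarith) (min_le_right _ _)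
    (Nat.le_add_left 1 N₀) (ha_pos _).le hstep
  refine (summable_nat_add_iff 1).2 (summable_one_div_sq_of_mul_rpow_le ?_ hc
    (eventually_atTop.2 ⟨N₀ + 1, hgrowth⟩))
  exact div_pos (ha_pos _) (by positivity)

theorem derw_B_finite (p : ℝ) (α : ℕ → ℝ)
    (hp' : p ∈ Set.Icc (0 : ℝ) 1) (hα' : ∀ n, α n ∈ Set.Icc (0 : ℝ) 1)
    (hp : 3 / 4 < p) (hα : 1 / (4 * p - 2) < liminf α atTop) :
    Summable fun k : ℕ => 1 / derwa p α (k + 1) ^ 2 :=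
  derw_B_finite_general p α hα' hp hα
end
end

section
/- Suppose one of the following three conditions holds: (1) p < 1 and ℓ_inf(α) > 0; (2) p = 1, 0 < ℓ_inf(α) ≤ ℓ_sup(α) < 1 and 0 < ℓ_inf(β) ≤ ℓ_sup(β) < (1−ℓ_sup(α))/(1−ℓ_inf(α)); (3) 0 = ℓ_inf(α) ≤ ℓ_sup(α) < 1 and 0 < ℓ_inf(β) ≤ ℓ_sup(β) < 1 − p·ℓ_sup(α). Then liminf_{n→∞} Var[X_n] > 0. -/
/-!
Since `X_n = ±1`, `Var[X_n] = 1 - e_n²` with `e_n = E[X_n]`, so it suffices that `|e_n| ≤ c < 1`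
eventually. Taking expectations in the conditional-mean condition gives, with `d = 2p - 1`,
`γ_n = 2β_n - 1` and `s_n = e_1 + ⋯ + e_n`,
`e_{n+1} = α_{n+1} d s_n / n + (1 - α_{n+1}) γ_{n+1}`,
so `|e_{n+1}|` is at most the convex combination, with weight `α_{n+1}`, of `|d| |s_n| / n ≤ 1` and
`|γ_{n+1}| ≤ 1`. Under conditions (2) and (3) one has `limsup β < 1`, so `|γ_n|` stays below some
`T < 1` while `1 - α_n` stays away from `0`. Under condition (1) `α_n` stays away from `0`, and it
suffices that `|d| |s_n| / n` stays below `1`: this is clear when `|d| < 1`, and when `p = 0` the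
recursion `|s_{n+1}| ≤ (1 - α_{n+1} / n) |s_n| + 1 - α_{n+1}` pulls `|s_n| / n` below `1 - a₀ / 2`
as soon as `α_n ≥ a₀ > 0` eventually.
-/

open MeasureTheory ProbabilityTheory Filter

noncomputable section

theorem eventually_le_mul_of_le_one_sub_div_mul {u a : ℕ → ℝ} {a₀ : ℝ} (ha₀ : 0 < a₀)
    (ha : ∀ᶠ n in atTop, a₀ ≤ a n ∧ a n ≤ 1)
    (hu : ∀ᶠ n in atTop, u (n + 1) ≤ (1 - a n / n) * u n + (1 - a n)) :
    ∀ᶠ n in atTop, u n ≤ (1 - a₀ / 2) * n := by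
  -- `(1 - a₀) n` is a supersolution of the recursion, so the excess `v` of `u` over it
  -- never increases while positive
  set v : ℕ → ℝ := fun n => u n - (1 - a₀) * n with hv
  have hstep : ∀ᶠ n in atTop, v (n + 1) ≤ max (v n) 0 := by
    filter_upwards [ha, hu, eventually_ge_atTop 1] with n ⟨hlo, hhi⟩ hun hn
    have hn : (1 : ℝ) ≤ n := by exact_mod_cast hn
    have hq0 : 0 ≤ a n / n := div_nonneg (by linarith) (by linarith)
    have hq1 : a n / n ≤ 1 := (div_le_one (by linarith)).2 (by linarith)
    have hcancel : a n / n * n = a n := div_mul_cancel₀ _ (by positivity)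
    have hcontract : v (n + 1) ≤ (1 - a n / n) * v n := by
      simp only [hv]; push_cast; nlinarith
    rcases le_total 0 (v n) with h | h
    · exact hcontract.trans (le_max_of_le_left (by nlinarith))
    · exact hcontract.trans (le_max_of_le_right (mul_nonpos_of_nonneg_of_nonpos (by linarith) h))
  obtain ⟨N, hN⟩ := eventually_atTop.1 hstep
  set C := max (v N) 0
  have hvC : ∀ n ≥ N, v n ≤ C := by
    intro n hn
    induction n, hn using Nat.le_induction with
    | base => exact le_max_left _ _
    | succ n hn ih => exact (hN n hn).trans (max_le ih (le_max_right _ _))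
  filter_upwards [eventually_ge_atTop N, eventually_ge_atTop ⌈2 * C / a₀⌉₊] with n hN hC
  have hCn : 2 * C / a₀ ≤ n := Nat.ceil_le.1 hC
  have : 2 * C ≤ a₀ * n := by rw [div_le_iff₀ ha₀] at hCn; linarith
  have := hvC n hN
  simp only [hv] at this
  linarith

open Finset in
def MeanRecursion (d : ℝ) (α γ e : ℕ → ℝ) : Prop :=
  ∀ n, 1 ≤ n →
    e (n + 1) = α (n + 1) * d / n * ∑ k ∈ Icc 1 n, e k + (1 - α (n + 1)) * γ (n + 1)

theorem abs_sum_Icc_le_of_abs_le_one {e : ℕ → ℝ} (he : ∀ n, |e n| ≤ 1) (n : ℕ) :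
    |∑ k ∈ Finset.Icc 1 n, e k| ≤ n := by
  calc |∑ k ∈ Finset.Icc 1 n, e k| ≤ ∑ k ∈ Finset.Icc 1 n, |e k| := Finset.abs_sum_le_sum_abs _ _
    _ ≤ (Finset.Icc 1 n).card • (1 : ℝ) := Finset.sum_le_card_nsmul _ _ _ fun k _ => he k
    _ = n := by simp

namespace MeanRecursion

variable {d : ℝ} {α γ e : ℕ → ℝ}

theorem sum_Icc_succ (h : MeanRecursion d α γ e) {n : ℕ} (hn : 1 ≤ n) :
    ∑ k ∈ Finset.Icc 1 (n + 1), e k =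
      (1 + α (n + 1) * d / n) * ∑ k ∈ Finset.Icc 1 n, e k + (1 - α (n + 1)) * γ (n + 1) := by
  rw [Finset.sum_Icc_succ_top (by omega), h n hn]
  ring

theorem abs_sum_Icc_succ_le (h : MeanRecursion d α γ e) (hd : |d| ≤ 1)
    (hα : ∀ n, α n ∈ Set.Icc (0 : ℝ) 1) (hγ : ∀ n, |γ n| ≤ 1) {n : ℕ} (hn : 1 ≤ n) :
    |∑ k ∈ Finset.Icc 1 (n + 1), e k| ≤
      (1 + α (n + 1) * d / n) * |∑ k ∈ Finset.Icc 1 n, e k| + (1 - α (n + 1)) := by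
  obtain ⟨hα0, hα1⟩ := hα (n + 1)
  have hfactor : 0 ≤ 1 + α (n + 1) * d / n := by
    have hn : (1 : ℝ) ≤ n := by exact_mod_cast hn
    have : -1 ≤ α (n + 1) * d / n := by
      rw [le_div_iff₀ (by linarith)]
      nlinarith [neg_abs_le d]
    linarith
  rw [h.sum_Icc_succ hn]
  refine (abs_add_le _ _).trans ?_
  rw [abs_mul, abs_mul, abs_of_nonneg hfactor, abs_of_nonneg (sub_nonneg.2 hα1)]
  gcongr
  exact mul_le_of_le_one_right (sub_nonneg.2 hα1) (hγ _)

theorem abs_succ_le (h : MeanRecursion d α γ e) (hα : ∀ n, α n ∈ Set.Icc (0 : ℝ) 1) {n : ℕ}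
    (hn : 1 ≤ n) :
    |e (n + 1)| ≤ α (n + 1) * (|d| * |∑ k ∈ Finset.Icc 1 n, e k| / n)
      + (1 - α (n + 1)) * |γ (n + 1)| := by
  obtain ⟨hα0, hα1⟩ := hα (n + 1)
  rw [h n hn]
  refine (abs_add_le _ _).trans_eq ?_
  rw [abs_mul, abs_mul, abs_div, abs_mul, abs_of_nonneg hα0, abs_of_nonneg (sub_nonneg.2 hα1),
    Nat.abs_cast]
  ring

theorem exists_abs_le_lt_one_of_ratio (h : MeanRecursion d α γ e)
    (hα : ∀ n, α n ∈ Set.Icc (0 : ℝ) 1) (hγ : ∀ n, |γ n| ≤ 1) {a₀ κ : ℝ} (ha₀ : 0 < a₀)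
    (hκ : κ < 1) (hαa₀ : ∀ᶠ n in atTop, a₀ ≤ α n)
    (hratio : ∀ᶠ n in atTop, |d| * |∑ k ∈ Finset.Icc 1 n, e k| / n ≤ κ) :
    ∃ c < 1, ∀ᶠ n in atTop, |e n| ≤ c := by
  refine ⟨1 - a₀ * (1 - κ), by nlinarith, ?_⟩
  rw [← map_add_atTop_eq_nat 1, eventually_map]
  filter_upwards [(tendsto_add_atTop_nat 1).eventually hαa₀, hratio, eventually_ge_atTop 1]
    with n ha hr hn
  obtain ⟨hα0, hα1⟩ := hα (n + 1)
  have := h.abs_succ_le hα hn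
  nlinarith [mul_le_mul_of_nonneg_left hr hα0,
    mul_le_of_le_one_right (sub_nonneg.2 hα1) (hγ (n + 1)),
    mul_le_mul_of_nonneg_right ha (sub_nonneg.2 hκ.le)]

theorem exists_abs_le_lt_one_of_abs_lt_one (h : MeanRecursion d α γ e) (hd : |d| < 1)
    (hα : ∀ n, α n ∈ Set.Icc (0 : ℝ) 1) (hγ : ∀ n, |γ n| ≤ 1) (he : ∀ n, |e n| ≤ 1) {a₀ : ℝ}
    (ha₀ : 0 < a₀) (hαa₀ : ∀ᶠ n in atTop, a₀ ≤ α n) :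
    ∃ c < 1, ∀ᶠ n in atTop, |e n| ≤ c := by
  refine h.exists_abs_le_lt_one_of_ratio hα hγ ha₀ hd hαa₀ ?_
  filter_upwards [eventually_ge_atTop 1] with n hn
  rw [div_le_iff₀ (by exact_mod_cast hn)]
  exact mul_le_mul_of_nonneg_left (abs_sum_Icc_le_of_abs_le_one he n) (abs_nonneg d)

theorem exists_abs_le_lt_one_of_eq_neg_one (h : MeanRecursion (-1) α γ e)
    (hα : ∀ n, α n ∈ Set.Icc (0 : ℝ) 1) (hγ : ∀ n, |γ n| ≤ 1) {a₀ : ℝ} (ha₀ : 0 < a₀)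
    (hαa₀ : ∀ᶠ n in atTop, a₀ ≤ α n) :
    ∃ c < 1, ∀ᶠ n in atTop, |e n| ≤ c := by
  have hαa₀' := (tendsto_add_atTop_nat 1).eventually hαa₀
  have hgrowth : ∀ᶠ n in atTop, |∑ k ∈ Finset.Icc 1 n, e k| ≤ (1 - a₀ / 2) * n := by
    refine eventually_le_mul_of_le_one_sub_div_mul (a := fun n => α (n + 1)) ha₀
      (hαa₀'.mono fun n hn => ⟨hn, (hα _).2⟩) ?_
    filter_upwards [eventually_ge_atTop 1] with n hn
    exact (h.abs_sum_Icc_succ_le (by norm_num) hα hγ hn).trans_eq (by ring)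
  refine h.exists_abs_le_lt_one_of_ratio hα hγ ha₀ (by linarith : 1 - a₀ / 2 < 1) hαa₀ ?_
  filter_upwards [hgrowth, eventually_ge_atTop 1] with n hs hn
  rwa [abs_neg, abs_one, one_mul, div_le_iff₀ (by exact_mod_cast hn)]

theorem exists_abs_le_lt_one_of_le_of_abs_le (h : MeanRecursion d α γ e) (hd : |d| ≤ 1)
    (hα : ∀ n, α n ∈ Set.Icc (0 : ℝ) 1) (he : ∀ n, |e n| ≤ 1) {A T : ℝ} (hA : A < 1)
    (hT : T < 1) (hαA : ∀ᶠ n in atTop, α n ≤ A) (hγT : ∀ᶠ n in atTop, |γ n| ≤ T) :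
    ∃ c < 1, ∀ᶠ n in atTop, |e n| ≤ c := by
  refine ⟨1 - (1 - A) * (1 - T), by nlinarith, ?_⟩
  rw [← map_add_atTop_eq_nat 1, eventually_map]
  filter_upwards [(tendsto_add_atTop_nat 1).eventually hαA,
    (tendsto_add_atTop_nat 1).eventually hγT, eventually_ge_atTop 1] with n ha hg hn
  obtain ⟨hα0, hα1⟩ := hα (n + 1)
  have hratio : |d| * |∑ k ∈ Finset.Icc 1 n, e k| / n ≤ 1 := by
    rw [div_le_one (by exact_mod_cast hn)]
    exact (mul_le_mul hd (abs_sum_Icc_le_of_abs_le_one he n) (abs_nonneg _) zero_le_one).trans_eq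
      (one_mul _)
  have := h.abs_succ_le hα hn
  nlinarith [mul_le_of_le_one_right hα0 hratio, mul_le_mul_of_nonneg_left hg (sub_nonneg.2 hα1),
    mul_le_mul_of_nonneg_right ha (sub_nonneg.2 hT.le)]

end MeanRecursion

theorem variance_eq_one_sub_sq_integral {Ω : Type*} [MeasurableSpace Ω] {μ : Measure Ω}
    [IsProbabilityMeasure μ] {X : Ω → ℝ} (hX : AEStronglyMeasurable X μ)
    (hX1 : ∀ᵐ ω ∂μ, X ω ^ 2 = 1) :
    variance X μ = 1 - (∫ ω, X ω ∂μ) ^ 2 := by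
  have hbound : ∀ᵐ ω ∂μ, ‖X ω‖ ≤ 1 := hX1.mono fun ω hω => by
    rw [Real.norm_eq_abs, ← sq_le_one_iff_abs_le_one, hω]
  have hsq : X ^ 2 =ᵐ[μ] fun _ => 1 := hX1.mono fun ω hω => by simpa using hω
  rw [variance_eq_sub (MemLp.of_bound hX 1 hbound), integral_congr_ae hsq]
  simp

theorem sum_Icc_derwX {Ω : Type*} {S : ℕ → Ω → ℝ} (hS0 : ∀ ω, S 0 ω = 0) (n : ℕ) (ω : Ω) :
    ∑ k ∈ Finset.Icc 1 n, derwX S k ω = S n ω := by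
  induction n with
  | zero => simp [hS0]
  | succ n ih => rw [Finset.sum_Icc_succ_top (by omega), ih, derwX, Nat.add_sub_cancel]; ring

namespace IsDERW

variable {Ω : Type*} [MeasurableSpace Ω] {μ : Measure Ω} {p q : ℝ} {α β : ℕ → ℝ}
  {S : ℕ → Ω → ℝ}

theorem abs_derwX_le_one (h : IsDERW μ p q α β S) (n : ℕ) (ω : Ω) : |derwX S n ω| ≤ 1 := by
  rcases Nat.eq_zero_or_pos n with rfl | hn
  · simp [derwX]
  · rcases h.hpm n hn ω with hX | hX <;> simp [hX]

theorem integrable_derwX [IsFiniteMeasure μ] (h : IsDERW μ p q α β S) (n : ℕ) :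
    Integrable (derwX S n) μ :=
  .of_bound (h.hmeas n).aestronglyMeasurable 1
    (.of_forall fun ω => by simpa using h.abs_derwX_le_one n ω)

theorem abs_integral_derwX_le_one [IsProbabilityMeasure μ] (h : IsDERW μ p q α β S) (n : ℕ) :
    |∫ ω, derwX S n ω ∂μ| ≤ 1 := by
  have := norm_integral_le_of_norm_le_const (μ := μ) (f := derwX S n) (C := 1)
    (.of_forall fun ω => by simpa using h.abs_derwX_le_one n ω)
  simpa using this

theorem variance_derwX [IsProbabilityMeasure μ] (h : IsDERW μ p q α β S) {n : ℕ} (hn : 1 ≤ n) :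
    variance (derwX S n) μ = 1 - (∫ ω, derwX S n ω ∂μ) ^ 2 :=
  variance_eq_one_sub_sq_integral (h.hmeas n).aestronglyMeasurable
    (.of_forall fun ω => by rcases h.hpm n hn ω with hX | hX <;> simp [hX])

theorem meanRecursion [IsProbabilityMeasure μ] (h : IsDERW μ p q α β S) :
    MeanRecursion (2 * p - 1) α (fun n => 2 * β n - 1) (fun n => ∫ ω, derwX S n ω ∂μ) := by
  intro n hn
  have hF : derwF S n ≤ ‹MeasurableSpace Ω› := iSup₂_le fun k _ => (h.hmeas k).comap_le
  have hSsum : (fun ω => ∑ k ∈ Finset.Icc 1 n, derwX S k ω) = S n :=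
    funext (sum_Icc_derwX h.hS0 n)
  have hSint : Integrable (S n) μ :=
    hSsum ▸ integrable_finsetSum _ fun k _ => h.integrable_derwX k
  have hS : ∫ ω, S n ω ∂μ = ∑ k ∈ Finset.Icc 1 n, ∫ ω, derwX S k ω ∂μ := by
    rw [← hSsum]
    exact integral_finsetSum _ fun k _ => h.integrable_derwX k
  dsimp only
  rw [← integral_condExp hF, integral_congr_ae (h.hCE n hn),
    integral_add (hSint.const_mul _) (integrable_const _), integral_const_mul, hS]
  simp [mul_div_right_comm]

theorem abs_two_mul_sub_one_le (h : IsDERW μ p q α β S) (n : ℕ) : |2 * β n - 1| ≤ 1 :=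
  abs_le.2 ⟨by linarith [(h.hβ n).1], by linarith [(h.hβ n).2]⟩

theorem exists_abs_integral_derwX_le_lt_one_of_lt_one [IsProbabilityMeasure μ]
    (h : IsDERW μ p q α β S) (hp : p < 1) (hα : 0 < liminf α atTop) :
    ∃ c < 1, ∀ᶠ n in atTop, |∫ ω, derwX S n ω ∂μ| ≤ c := by
  obtain ⟨a₀, ha₀, ha₀α⟩ := exists_between hα
  have hαa₀ : ∀ᶠ n in atTop, a₀ ≤ α n :=
    (eventually_lt_of_lt_liminf ha₀α (isBoundedUnder_of ⟨0, fun n => (h.hα n).1⟩)).mono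
      fun _ => le_of_lt
  rcases h.hp.1.eq_or_lt with rfl | hp0
  · have hrec := h.meanRecursion
    rw [show 2 * (0 : ℝ) - 1 = -1 by norm_num] at hrec
    exact hrec.exists_abs_le_lt_one_of_eq_neg_one h.hα h.abs_two_mul_sub_one_le ha₀ hαa₀
  · exact h.meanRecursion.exists_abs_le_lt_one_of_abs_lt_one
      (abs_lt.2 ⟨by linarith, by linarith⟩) h.hα h.abs_two_mul_sub_one_le
      h.abs_integral_derwX_le_one ha₀ hαa₀

theorem exists_abs_integral_derwX_le_lt_one_of_limsup_lt_one [IsProbabilityMeasure μ]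
    (h : IsDERW μ p q α β S) (hα : limsup α atTop < 1) (hβ₀ : 0 < liminf β atTop)
    (hβ₁ : limsup β atTop < 1) :
    ∃ c < 1, ∀ᶠ n in atTop, |∫ ω, derwX S n ω ∂μ| ≤ c := by
  obtain ⟨A, hαA, hA⟩ := exists_between hα
  obtain ⟨lo, hlo, hloβ⟩ := exists_between hβ₀
  obtain ⟨hi, hβhi, hhi⟩ := exists_between hβ₁
  have hαA' := eventually_lt_of_limsup_lt hαA (isBoundedUnder_of ⟨1, fun n => (h.hα n).2⟩)
  have hβlo := eventually_lt_of_lt_liminf hloβ (isBoundedUnder_of ⟨0, fun n => (h.hβ n).1⟩)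
  have hβhi := eventually_lt_of_limsup_lt hβhi (isBoundedUnder_of ⟨1, fun n => (h.hβ n).2⟩)
  refine h.meanRecursion.exists_abs_le_lt_one_of_le_of_abs_le
    (abs_le.2 ⟨by linarith [h.hp.1], by linarith [h.hp.2]⟩) h.hα h.abs_integral_derwX_le_one hA
    (max_lt (by linarith : 2 * hi - 1 < 1) (by linarith : 1 - 2 * lo < 1))
    (hαA'.mono fun _ => le_of_lt) ?_
  filter_upwards [hβlo, hβhi] with n hlo hhi
  exact abs_le.2 ⟨by linarith [le_max_right (2 * hi - 1) (1 - 2 * lo)],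
    by linarith [le_max_left (2 * hi - 1) (1 - 2 * lo)]⟩

theorem liminf_variance_derwX_pos [IsProbabilityMeasure μ] (h : IsDERW μ p q α β S)
    (hmean : ∃ c < 1, ∀ᶠ n in atTop, |∫ ω, derwX S n ω ∂μ| ≤ c) :
    0 < liminf (fun n => variance (derwX S n) μ) atTop := by
  obtain ⟨c, hc, hev⟩ := hmean
  have hc0 : 0 ≤ c := (abs_nonneg _).trans hev.exists.choose_spec
  have hvar : ∀ᶠ n in atTop, 1 - c ^ 2 ≤ variance (derwX S n) μ := by
    filter_upwards [hev, eventually_ge_atTop 1] with n hn hn1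
    rw [h.variance_derwX hn1, sub_le_sub_iff_left, ← sq_abs]
    exact pow_le_pow_left₀ (abs_nonneg _) hn 2
  have hbdd : IsCoboundedUnder (· ≥ ·) atTop fun n => variance (derwX S n) μ := by
    refine isCoboundedUnder_ge_of_eventually_le atTop (x := 1) ?_
    filter_upwards [eventually_ge_atTop 1] with n hn1
    rw [h.variance_derwX hn1]
    nlinarith
  exact (by nlinarith : (0 : ℝ) < 1 - c ^ 2).trans_le (le_liminf_of_le hbdd hvar)

end IsDERW

variable {Ω : Type*} {m0 : MeasurableSpace Ω} (μ : Measure Ω) [IsProbabilityMeasure μ]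
  (p q : ℝ) (α β : ℕ → ℝ) (S : ℕ → Ω → ℝ)

theorem derw_liminf_var_pos (h : IsDERW μ p q α β S)
    (hcond :
      (p < 1 ∧ 0 < liminf α atTop) ∨
      (p = 1 ∧ 0 < liminf α atTop ∧ limsup α atTop < 1 ∧
        0 < liminf β atTop ∧
        limsup β atTop < (1 - limsup α atTop) / (1 - liminf α atTop)) ∨
      (liminf α atTop = 0 ∧ limsup α atTop < 1 ∧
        0 < liminf β atTop ∧
        limsup β atTop < 1 - p * limsup α atTop)) :
    0 < liminf (fun n => variance (derwX S n) μ) atTop := by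
  have hα : liminf α atTop ≤ limsup α atTop :=
    liminf_le_limsup (isBoundedUnder_of ⟨1, fun n => (h.hα n).2⟩)
      (isBoundedUnder_of ⟨0, fun n => (h.hα n).1⟩)
  refine h.liminf_variance_derwX_pos ?_
  rcases hcond with ⟨hp, hα₀⟩ | ⟨-, -, hα₁, hβ₀, hβ₁⟩ | ⟨hα₀, hα₁, hβ₀, hβ₁⟩
  · exact h.exists_abs_integral_derwX_le_lt_one_of_lt_one hp hα₀
  · refine h.exists_abs_integral_derwX_le_lt_one_of_limsup_lt_one hα₁ hβ₀ (hβ₁.trans_le ?_)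
    exact (div_le_one (by linarith)).2 (by linarith)
  · refine h.exists_abs_integral_derwX_le_lt_one_of_limsup_lt_one hα₁ hβ₀ (hβ₁.trans_le ?_)
    nlinarith [h.hp.1]
end
end
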